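/- Let $G$ be a group acting by affine maps on a convex subset $C$ of a vector space. For finite nonempty subsets $\Phi \subseteq G$, a fixed $x \in C$, and $\gamma \in G$, setting $x_\Phi = \frac{1}{|\Phi|}\sum_{g \in \Phi} g \cdot x$, one has $x_\Phi - \gamma \cdot x_\Phi \in \frac{|\gamma\Phi \triangle \Phi|}{2|\Phi|}(C - C)$, where $C - C = \{c - c' : c, c' \in C\}$ and $\triangle$ denotes symmetric difference. -/

import Mathlib

open scoped symmDiff Pointwise

/-!
Since `ρ γ` is affine on `C`, it commutes with averaging, so `γ · x_Φ` is the average of `g · x`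
over `γΦ`. The sums over `Φ` and `γΦ` differ only by the terms over `Φ \ γΦ` and `γΦ \ Φ`, both
of size `k = |γΦ ∆ Φ| / 2`. The averages over these two sets lie in `C`, so
`x_Φ - γ · x_Φ` is `k / |Φ|` times an element of `C - C`.
-/

open Finset

section

variable {V W : Type*} [AddCommGroup V] [Module ℝ V] [AddCommGroup W] [Module ℝ W]

def IsAffineOn (C : Set V) (f : V → W) : Prop :=
  ∀ x ∈ C, ∀ y ∈ C, ∀ t ∈ Set.Icc (0 : ℝ) 1, f (t • x + (1 - t) • y) = t • f x + (1 - t) • f y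

theorem Finset.sum_smul_eq_smul_sum_div_smul {ι : Type*} (s : Finset ι) {w : ι → ℝ}
    (hw : ∑ i ∈ s, w i ≠ 0) (q : ι → V) :
    ∑ i ∈ s, w i • q i = (∑ j ∈ s, w j) • ∑ i ∈ s, (w i / ∑ j ∈ s, w j) • q i := by
  rw [smul_sum]
  exact sum_congr rfl fun i _ => by rw [smul_smul, mul_div_cancel₀ _ hw]

theorem IsAffineOn.map_sum_smul {C : Set V} {f : V → W} (hf : IsAffineOn C f) (hC : Convex ℝ C)
    {ι : Type*} {s : Finset ι} {w : ι → ℝ} {p : ι → V} (hw₀ : ∀ i ∈ s, 0 ≤ w i)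
    (hw₁ : ∑ i ∈ s, w i = 1) (hp : ∀ i ∈ s, p i ∈ C) :
    f (∑ i ∈ s, w i • p i) = ∑ i ∈ s, w i • f (p i) := by
  induction s using Finset.cons_induction generalizing w with
  | empty => simp at hw₁
  | cons a t ha ih =>
    simp only [sum_cons, forall_mem_cons] at hw₀ hw₁ hp ⊢
    rcases (sum_nonneg hw₀.2).eq_or_lt with hr | hr
    · have hwt : ∀ i ∈ t, w i = 0 := (sum_eq_zero_iff_of_nonneg hw₀.2).mp hr.symm
      have hwa : w a = 1 := by linarith
      rw [sum_eq_zero (f := fun i => w i • p i) fun i hi => by simp [hwt i hi],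
        sum_eq_zero (f := fun i => w i • f (p i)) fun i hi => by simp [hwt i hi], hwa]
      simp only [one_smul, add_zero]
    · -- The tail is `r • y` with `r = ∑ i ∈ t, w i` and `y ∈ C` a convex combination.
      have hw' : ∑ i ∈ t, w i / ∑ j ∈ t, w j = 1 := by rw [← sum_div, div_self hr.ne']
      have hw₀' : ∀ i ∈ t, 0 ≤ w i / ∑ j ∈ t, w j := fun i hi => div_nonneg (hw₀.2 i hi) hr.le
      have hy : ∑ i ∈ t, (w i / ∑ j ∈ t, w j) • p i ∈ C := hC.sum_mem hw₀' hw' hp.2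
      rw [t.sum_smul_eq_smul_sum_div_smul hr.ne', t.sum_smul_eq_smul_sum_div_smul hr.ne',
        ← ih hw₀' hw' hp.2]
      have := hf _ hp.1 _ hy (w a) ⟨hw₀.1, by linarith⟩
      rwa [show 1 - w a = ∑ j ∈ t, w j by linarith] at this

theorem Convex.inv_card_smul_sum_mem {C : Set V} (hC : Convex ℝ C) {ι : Type*} {s : Finset ι}
    (hs : s.Nonempty) {p : ι → V} (hp : ∀ i ∈ s, p i ∈ C) : (#s : ℝ)⁻¹ • ∑ i ∈ s, p i ∈ C := by
  rw [smul_sum]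
  refine hC.sum_mem (fun _ _ => by positivity) ?_ hp
  rw [sum_const, nsmul_eq_mul, mul_inv_cancel₀ (by simpa using hs.ne_empty)]

theorem IsAffineOn.map_inv_card_smul_sum {C : Set V} {f : V → W} (hf : IsAffineOn C f)
    (hC : Convex ℝ C) {ι : Type*} {s : Finset ι} (hs : s.Nonempty) {p : ι → V}
    (hp : ∀ i ∈ s, p i ∈ C) : f ((#s : ℝ)⁻¹ • ∑ i ∈ s, p i) = (#s : ℝ)⁻¹ • ∑ i ∈ s, f (p i) := by
  rw [smul_sum, smul_sum]
  refine hf.map_sum_smul hC (fun _ _ => by positivity) ?_ hp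
  rw [sum_const, nsmul_eq_mul, mul_inv_cancel₀ (by simpa using hs.ne_empty)]

theorem Convex.sum_sub_sum_mem_card_smul_sub {C : Set V} (hC : Convex ℝ C) (hCne : C.Nonempty)
    {ι : Type*} {s t : Finset ι} (hst : #s = #t) {p : ι → V} (hps : ∀ i ∈ s, p i ∈ C)
    (hpt : ∀ i ∈ t, p i ∈ C) : ∑ i ∈ s, p i - ∑ i ∈ t, p i ∈ (#s : ℝ) • (C - C) := by
  rcases s.eq_empty_or_nonempty with rfl | hs
  · rw [card_eq_zero.mp hst.symm]
    simp [Set.zero_smul_set (hCne.sub hCne)]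
  have ht : t.Nonempty := card_pos.mp (hst ▸ card_pos.mpr hs)
  have hmem := Set.smul_mem_smul_set (a := (#s : ℝ)) <| Set.sub_mem_sub
    (hC.inv_card_smul_sum_mem hs hps) (hC.inv_card_smul_sum_mem ht hpt)
  rwa [← hst, ← smul_sub, smul_smul, mul_inv_cancel₀ (by simpa using hs.ne_empty), one_smul]
    at hmem

end

theorem Finset.card_symmDiff_eq_two_mul_card_sdiff {α : Type*} [DecidableEq α] {s t : Finset α}
    (h : #s = #t) : #(t ∆ s) = 2 * #(s \ t) := by
  rw [symmDiff_def, sup_eq_union, card_union_of_disjoint disjoint_sdiff_sdiff, card_sdiff_comm h]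
  ring

theorem stmt1_general {G V : Type*} [Group G] [DecidableEq G] [AddCommGroup V] [Module ℝ V]
    (ρ : G → V → V) (C : Set V) (hconv : Convex ℝ C)
    (hmul : ∀ g h v, ρ (g * h) v = ρ g (ρ h v))
    (hmaps : ∀ g, Set.MapsTo (ρ g) C C)
    (haff : ∀ g, ∀ x ∈ C, ∀ y ∈ C, ∀ t : ℝ, t ∈ Set.Icc (0:ℝ) 1 →
      ρ g (t • x + (1 - t) • y) = t • ρ g x + (1 - t) • ρ g y)
    (Φ : Finset G) (hΦ : Φ.Nonempty) (x : V) (hx : x ∈ C) (γ : G) :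
    (Φ.card : ℝ)⁻¹ • (∑ g ∈ Φ, ρ g x) - ρ γ ((Φ.card : ℝ)⁻¹ • ∑ g ∈ Φ, ρ g x)
      ∈ ((((Φ.image (γ * ·)) ∆ Φ).card : ℝ) / (2 * Φ.card)) • (C - C) := by
  set γΦ := Φ.image (γ * ·)
  have hcard : #γΦ = #Φ := card_image_of_injective _ (mul_right_injective γ)
  have htranslate : ρ γ ((#Φ : ℝ)⁻¹ • ∑ g ∈ Φ, ρ g x) = (#Φ : ℝ)⁻¹ • ∑ g ∈ γΦ, ρ g x := by
    have hγ : IsAffineOn C (ρ γ) := haff γ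
    rw [hγ.map_inv_card_smul_sum hconv hΦ fun g _ => hmaps g hx,
      sum_image fun _ _ _ _ h => mul_right_injective γ h]
    simp only [hmul]
  rw [htranslate, ← smul_sub, ← sum_sdiff_sub_sum_sdiff]
  have hdiff := hconv.sum_sub_sum_mem_card_smul_sub ⟨x, hx⟩ (card_sdiff_comm hcard.symm)
    (p := fun g => ρ g x) (fun g _ => hmaps g hx) (fun g _ => hmaps g hx)
  convert Set.smul_mem_smul_set (a := (#Φ : ℝ)⁻¹) hdiff using 1
  rw [smul_smul, card_symmDiff_eq_two_mul_card_sdiff hcard.symm]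
  push_cast
  field_simp

/-- For a group acting by affine maps on a convex set `C`, the Følner-type average
`x_Φ = |Φ|⁻¹ ∑_{g ∈ Φ} g·x` satisfies
`x_Φ - γ·x_Φ ∈ (|γΦ ∆ Φ| / (2|Φ|)) • (C - C)`. -/
theorem stmt1 {G V : Type*} [Group G] [DecidableEq G] [AddCommGroup V] [Module ℝ V]
    (ρ : G → V → V) (C : Set V) (hconv : Convex ℝ C)
    (hone : ∀ v, ρ 1 v = v) (hmul : ∀ g h v, ρ (g * h) v = ρ g (ρ h v))
    (hmaps : ∀ g, Set.MapsTo (ρ g) C C)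
    (haff : ∀ g, ∀ x ∈ C, ∀ y ∈ C, ∀ t : ℝ, t ∈ Set.Icc (0:ℝ) 1 →
      ρ g (t • x + (1 - t) • y) = t • ρ g x + (1 - t) • ρ g y)
    (Φ : Finset G) (hΦ : Φ.Nonempty) (x : V) (hx : x ∈ C) (γ : G) :
    (Φ.card : ℝ)⁻¹ • (∑ g ∈ Φ, ρ g x) - ρ γ ((Φ.card : ℝ)⁻¹ • ∑ g ∈ Φ, ρ g x)
      ∈ ((((Φ.image (γ * ·)) ∆ Φ).card : ℝ) / (2 * Φ.card)) • (C - C) :=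
  stmt1_general ρ C hconv hmul hmaps haff Φ hΦ x hx γ
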